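/- arXiv:1306.4476 — 3 statements merged into one kernel-verified Lean document; each statement's English description precedes it below -/
import Mathlib

section
/- Suppose that for μ-almost every z ∈ Ω and every t ≥ 0 the limit F_z(t) = lim_{n→∞} F_z^n(t) exists, and that F_z(t) → 0 as t → ∞. Then (1/n) log τ_{A_n(z)}(x) converges to h_μ in probability with respect to the product measure μ × μ; that is, for every ε > 0, (μ × μ)({(x,z) ∈ Ω × Ω : |(1/n) log τ_{A_n(z)}(x) − h_μ| > ε}) → 0 as n → ∞. -/
open MeasureTheory Filter Set
open scoped ENNReal

variable {Ω : Type*} [MeasurableSpace Ω]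

/-- The `n`-cylinder containing `x`, for the countable measurable partition given by the
symbol map `P` and its joins under the dynamics `T`. -/
def cylAt (T : Ω → Ω) (P : Ω → ℕ) (n : ℕ) (x : Ω) : Set Ω :=
  {y | ∀ i < n, P (T^[i] y) = P (T^[i] x)}

/-- The `n`-cylinder determined by a word `w` of length `n`. -/
def cylW (T : Ω → Ω) (P : Ω → ℕ) (n : ℕ) (w : Fin n → ℕ) : Set Ω :=
  {y | ∀ i : Fin n, P (T^[(i : ℕ)] y) = w i}

/-- The collection of all cylinder sets (elements of all the joins `𝒜ⁿ`). -/
def cylSets (T : Ω → Ω) (P : Ω → ℕ) : Set (Set Ω) :=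
  {A | ∃ n, ∃ w : Fin n → ℕ, A = cylW T P n w}

/-- The partition is generating: every measurable set agrees mod `μ`-null sets with a set in
the σ-algebra generated by the cylinders. -/
def GeneratingPartition (T : Ω → Ω) (P : Ω → ℕ) (μ : Measure Ω) : Prop :=
  ∀ s : Set Ω, MeasurableSet s →
    ∃ t : Set Ω, MeasurableSet[MeasurableSpace.generateFrom (cylSets T P)] t ∧
      μ (symmDiff s t) = 0

/-- First entrance time `τ_A(x) = min {i ≥ 1 : T^i x ∈ A}` (junk value `0` if the orbit
never enters `A`). -/
noncomputable def hitTime (T : Ω → Ω) (A : Set Ω) (x : Ω) : ℕ :=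
  sInf {i | 1 ≤ i ∧ T^[i] x ∈ A}

/-- The Shannon–McMillan–Breiman property with constant `h`:
`-(1/n) log μ(A_n(x)) → h` for `μ`-a.e. `x`. -/
def SMB (T : Ω → Ω) (P : Ω → ℕ) (μ : Measure Ω) (h : ℝ) : Prop :=
  ∀ᵐ x ∂μ, Tendsto (fun n : ℕ => -Real.log ((μ (cylAt T P n x)).toReal) / n)
    atTop (nhds h)

/-- The entrance-time distribution `F_z^n(t) = μ {x : τ_{A_n(z)}(x) ≥ t / μ(A_n(z))}`. -/
noncomputable def Fdist (T : Ω → Ω) (P : Ω → ℕ) (μ : Measure Ω) (z : Ω) (n : ℕ)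
    (t : ℝ) : ℝ :=
  (μ {x | t / (μ (cylAt T P n z)).toReal ≤ (hitTime T (cylAt T P n z) x : ℝ)}).toReal

/-- `μ` is `φ`-mixing: `|μ(A ∩ T^{-(n+i)}B) - μ(A)μ(B)| ≤ φ(i) μ(A)` for every `n`-cylinder
`A` and every `B` in the σ-algebra generated by all cylinders, with `φ` decreasing. -/
def PhiMixing (T : Ω → Ω) (P : Ω → ℕ) (μ : Measure Ω) (φ : ℕ → ℝ) : Prop :=
  Antitone φ ∧
  ∀ (n i : ℕ) (w : Fin n → ℕ) (B : Set Ω),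
    MeasurableSet[MeasurableSpace.generateFrom (cylSets T P)] B →
    |(μ (cylW T P n w ∩ T^[n + i] ⁻¹' B)).toReal -
        (μ (cylW T P n w)).toReal * (μ B).toReal| ≤
      φ i * (μ (cylW T P n w)).toReal

/-- The partition `{P = j}_j` has an exponentially decaying tail:
`μ(∪_{i ≥ j} 𝒫_i) ≤ c δ^j` for some `c > 0` and `0 ≤ δ < 1`. -/
def ExpTail (P : Ω → ℕ) (μ : Measure Ω) : Prop :=
  ∃ c > (0 : ℝ), ∃ δ : ℝ, 0 ≤ δ ∧ δ < 1 ∧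
    ∀ j : ℕ, (μ {x | j ≤ P x}).toReal ≤ c * δ ^ j

/-- `Z_n(s) = Σ_{A ∈ 𝒜ⁿ} μ(A)^{1+s}`. -/
noncomputable def Zfun (T : Ω → Ω) (P : Ω → ℕ) (μ : Measure Ω) (n : ℕ) (s : ℝ) : ℝ :=
  ∑' w : Fin n → ℕ, (μ (cylW T P n w)).toReal ^ (1 + s)

/-- `W_n^s(x,z) = Σ_{i=1}^{τ_{A_n(z)}(x)} μ(A_n(T^i x))^s`. -/
noncomputable def W (T : Ω → Ω) (P : Ω → ℕ) (μ : Measure Ω) (s : ℝ) (n : ℕ)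
    (x z : Ω) : ℝ :=
  ∑ i ∈ Finset.Icc 1 (hitTime T (cylAt T P n z) x),
    (μ (cylAt T P n (T^[i] x))).toReal ^ s

/-- The hitting number `N_{U,M}(x) = Σ_{i=0}^M χ_U(T^i x)`. -/
noncomputable def hitNum (T : Ω → Ω) (U : Set Ω) (M : ℕ) (x : Ω) : ℕ :=
  ∑ i ∈ Finset.range (M + 1), U.indicator (fun _ => 1) (T^[i] x)

/-- `U` is a union of `n`-cylinders (i.e. `U ∈ σ(𝒜ⁿ)`). -/
def UnionOfCyl (T : Ω → Ω) (P : Ω → ℕ) (n : ℕ) (U : Set Ω) : Prop :=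
  ∃ S : Set (Fin n → ℕ), U = ⋃ w ∈ S, cylW T P n w


section EntAuxSection

set_option linter.unusedSectionVars false

namespace EntAux

variable {Ω : Type*} [MeasurableSpace Ω]

def wordMap (T : Ω → Ω) (P : Ω → ℕ) (n : ℕ) (z : Ω) : Fin n → ℕ := fun i => P (T^[(i:ℕ)] z)

variable {T : Ω → Ω} {P : Ω → ℕ} {n : ℕ} {w : Fin n → ℕ} {x y z : Ω} {μ : Measure Ω}

lemma mem_cylW_iff : y ∈ cylW T P n w ↔ wordMap T P n y = w := by
  simp [cylW, wordMap, funext_iff]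

lemma cylAt_eq_cylW (T : Ω → Ω) (P : Ω → ℕ) (n : ℕ) (x : Ω) :
    cylAt T P n x = cylW T P n (wordMap T P n x) := by
  ext y
  simp only [cylAt, cylW, wordMap, mem_setOf_eq]
  exact ⟨fun h i => h i i.2, fun h i hi => h ⟨i, hi⟩⟩

lemma cylAt_anti (T : Ω → Ω) (P : Ω → ℕ) {m n : ℕ} (hmn : m ≤ n) (x : Ω) :
    cylAt T P n x ⊆ cylAt T P m x := fun _ hy i hi => hy i (lt_of_lt_of_le hi hmn)

lemma cylAt_eq_of_mem (hy : y ∈ cylAt T P n x) : cylAt T P n y = cylAt T P n x := by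
  ext u
  constructor
  · intro hu i hi; rw [hu i hi, hy i hi]
  · intro hu i hi; rw [hu i hi, ← hy i hi]

lemma mem_cylAt_symm (hy : y ∈ cylAt T P n x) : x ∈ cylAt T P n y :=
  fun i hi => (hy i hi).symm

lemma measurableSet_cylW (hT : Measurable T) (hP : Measurable P) :
    MeasurableSet (cylW T P n w) := by
  have : cylW T P n w = ⋂ i : Fin n, (fun y => P (T^[(i:ℕ)] y)) ⁻¹' {w i} := by
    ext y; simp [cylW]
  rw [this]
  exact MeasurableSet.iInter fun i => (hP.comp (hT.iterate _)) (measurableSet_singleton _)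

lemma measurableSet_wordMap_preimage (hT : Measurable T) (hP : Measurable P)
    (S : Set (Fin n → ℕ)) : MeasurableSet (wordMap T P n ⁻¹' S) := by
  have : wordMap T P n ⁻¹' S = ⋃ w ∈ S, cylW T P n w := by
    ext z
    simp only [mem_preimage, mem_iUnion, exists_prop]
    constructor
    · intro hz; exact ⟨wordMap T P n z, hz, mem_cylW_iff.2 rfl⟩
    · rintro ⟨w, hw, hz⟩; rwa [mem_cylW_iff.1 hz]
  rw [this]
  exact MeasurableSet.biUnion S.to_countable fun w _ => measurableSet_cylW hT hP

lemma measurable_comp_wordMap (hT : Measurable T) (hP : Measurable P)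
    {E : Type*} [MeasurableSpace E] (g : (Fin n → ℕ) → E) :
    Measurable (fun z => g (wordMap T P n z)) := fun s _ => by
  exact measurableSet_wordMap_preimage hT hP (g ⁻¹' s)

lemma measurableSet_cylAt (hT : Measurable T) (hP : Measurable P) :
    MeasurableSet (cylAt T P n x) := by
  rw [cylAt_eq_cylW]; exact measurableSet_cylW hT hP

lemma hitTime_eq_zero_iff {A : Set Ω} :
    hitTime T A x = 0 ↔ ∀ i, 1 ≤ i → T^[i] x ∉ A := by
  constructor
  · intro h0 i hi hmem
    have hne : {i | 1 ≤ i ∧ T^[i] x ∈ A}.Nonempty := ⟨i, hi, hmem⟩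
    have := Nat.sInf_mem hne
    rw [hitTime] at h0
    rw [h0] at this
    exact absurd this.1 (by norm_num)
  · intro hall
    have : {i | 1 ≤ i ∧ T^[i] x ∈ A} = ∅ := by
      ext i; simp only [mem_setOf_eq, mem_empty_iff_false, iff_false, not_and]
      exact fun hi => hall i hi
    rw [hitTime, this, Nat.sInf_empty]

lemma hitTime_spec {A : Set Ω} (h0 : hitTime T A x ≠ 0) :
    1 ≤ hitTime T A x ∧ T^[hitTime T A x] x ∈ A := by
  have hne : {i | 1 ≤ i ∧ T^[i] x ∈ A}.Nonempty := by
    by_contra hc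
    rw [not_nonempty_iff_eq_empty] at hc
    exact h0 (by rw [hitTime, hc, Nat.sInf_empty])
  exact Nat.sInf_mem hne

lemma measurable_hitTime (hT : Measurable T) {A : Set Ω} (hA : MeasurableSet A) :
    Measurable (hitTime T A) := by
  apply measurable_to_countable'
  intro k
  match k with
  | 0 =>
    have : hitTime T A ⁻¹' {0} = ⋂ i, ⋂ (_ : 1 ≤ i), T^[i] ⁻¹' Aᶜ := by
      ext x
      simp only [mem_preimage, mem_singleton_iff, mem_iInter, mem_compl_iff]
      exact hitTime_eq_zero_iff
    rw [this]
    exact MeasurableSet.iInter fun i => MeasurableSet.iInter fun _ =>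
      (hT.iterate i) hA.compl
  | (k+1) =>
    have : hitTime T A ⁻¹' {k+1} =
        (T^[k+1] ⁻¹' A) ∩ ⋂ i, ⋂ (_ : 1 ≤ i), ⋂ (_ : i ≤ k), T^[i] ⁻¹' Aᶜ := by
      ext x
      simp only [mem_preimage, mem_singleton_iff, mem_inter_iff, mem_iInter, mem_compl_iff]
      constructor
      · intro he
        have h0 : hitTime T A x ≠ 0 := by omega
        obtain ⟨h1, h2⟩ := hitTime_spec h0
        rw [he] at h2
        refine ⟨h2, fun i hi hik hmem => ?_⟩
        have : hitTime T A x ≤ i := Nat.sInf_le ⟨hi, hmem⟩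
        omega
      · rintro ⟨hmem, hlt⟩
        have hle : hitTime T A x ≤ k + 1 := Nat.sInf_le ⟨by omega, hmem⟩
        have h0 : hitTime T A x ≠ 0 := by
          intro h0
          exact (hitTime_eq_zero_iff.1 h0) (k+1) (by omega) hmem
        obtain ⟨h1, h2⟩ := hitTime_spec h0
        by_contra hne
        have hk : hitTime T A x ≤ k := by omega
        exact hlt _ h1 hk h2
    rw [this]
    exact ((hT.iterate _) hA).inter <| MeasurableSet.iInter fun i =>
      MeasurableSet.iInter fun _ => MeasurableSet.iInter fun _ => (hT.iterate i) hA.compl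

lemma measurable_tau (hT : Measurable T) (hP : Measurable P) (n : ℕ) :
    Measurable (fun p : Ω × Ω => hitTime T (cylAt T P n p.2) p.1) := by
  apply measurable_to_countable'
  intro k
  have hset : (fun p : Ω × Ω => hitTime T (cylAt T P n p.2) p.1) ⁻¹' {k}
      = ⋃ w : Fin n → ℕ,
          (hitTime T (cylW T P n w) ⁻¹' {k}) ×ˢ (wordMap T P n ⁻¹' {w}) := by
    ext ⟨x, z⟩
    simp only [mem_preimage, mem_singleton_iff, mem_iUnion, mem_prod]
    constructor
    · intro hk
      exact ⟨wordMap T P n z, by rwa [← cylAt_eq_cylW], rfl⟩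
    · rintro ⟨w, hw, hwz⟩
      rwa [cylAt_eq_cylW, hwz]
  rw [hset]
  exact MeasurableSet.iUnion fun w =>
    ((measurable_hitTime hT (measurableSet_cylW hT hP)) (measurableSet_singleton k)).prod
      (measurableSet_wordMap_preimage hT hP {w})

lemma ae_exists_hit [IsProbabilityMeasure μ] (herg : Ergodic T μ) {A : Set Ω}
    (hA : MeasurableSet A) (h0 : μ A ≠ 0) :
    ∀ᵐ x ∂μ, ∃ i, 1 ≤ i ∧ T^[i] x ∈ A := by
  have hT : Measurable T := herg.toMeasurePreserving.measurable
  set V : Set Ω := ⋃ i : ℕ, T^[i+1] ⁻¹' A with hV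
  have hVm : MeasurableSet V := MeasurableSet.iUnion fun i => (hT.iterate _) hA
  have hsub : T ⁻¹' V ⊆ V := by
    intro x hx
    simp only [hV, mem_iUnion, mem_preimage] at hx ⊢
    obtain ⟨i, hi⟩ := hx
    exact ⟨i + 1, by rwa [Function.iterate_succ_apply]⟩
  rcases herg.ae_empty_or_univ_of_preimage_ae_le' hVm.nullMeasurableSet
      hsub.eventuallyLE (measure_ne_top μ V) with hemp | huniv
  · exfalso
    have hVz : μ V = 0 := by simpa using measure_congr hemp
    have hsub2 : T ⁻¹' A ⊆ V := by
      intro x hx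
      simp only [hV, mem_iUnion, mem_preimage]
      exact ⟨0, by simpa using hx⟩
    have hpre : μ (T ⁻¹' A) = μ A :=
      herg.toMeasurePreserving.measure_preimage hA.nullMeasurableSet
    exact h0 (le_antisymm (hpre ▸ (measure_mono hsub2).trans hVz.le) zero_le)
  · have hae : ∀ᵐ x ∂μ, x ∈ V := by
      rw [ae_iff]
      have := ae_eq_univ.1 huniv
      exact (by simpa using this : μ Vᶜ = 0)
    filter_upwards [hae] with x hx
    simp only [hV, mem_iUnion, mem_preimage] at hx
    obtain ⟨i, hi⟩ := hx
    exact ⟨i + 1, by omega, hi⟩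

lemma smb_bounds {m : ℕ → ℝ≥0∞} {h : ℝ}
    (hfin : ∀ n, m n ≠ ⊤)
    (hy : Tendsto (fun n : ℕ => -Real.log ((m n).toReal) / n) atTop (nhds h))
    (hpos : ∀ n, m n ≠ 0) {δ : ℝ} (hδ : 0 < δ) :
    ∀ᶠ n : ℕ in atTop,
      Real.exp (-(n:ℝ) * (h + δ)) ≤ (m n).toReal ∧
      (m n).toReal ≤ Real.exp (-(n:ℝ) * (h - δ)) := by
  have h2 : ∀ᶠ n : ℕ in atTop, dist (-Real.log ((m n).toReal) / n) h < δ :=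
    (Metric.tendsto_nhds.mp hy) δ hδ
  filter_upwards [h2, eventually_ge_atTop 1] with n hn hn1
  have hm0 : 0 < (m n).toReal := ENNReal.toReal_pos (hpos n) (hfin n)
  have hnR : (0:ℝ) < n := by exact_mod_cast hn1
  rw [Real.dist_eq, abs_lt] at hn
  obtain ⟨hlo, hhi⟩ := hn
  have hlog1 : -Real.log ((m n).toReal) < (h + δ) * n := by
    rw [div_sub' (ne_of_gt hnR), div_lt_iff₀ hnR] at hhi
    nlinarith
  have hlog2 : (h - δ) * n < -Real.log ((m n).toReal) := by
    have h3 : h - δ < -Real.log ((m n).toReal) / n := by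
      have := neg_lt_of_neg_lt hlo
      linarith
    exact (lt_div_iff₀ hnR).mp h3
  constructor
  · have hlt : -(↑n : ℝ) * (h + δ) < Real.log ((m n).toReal) := by nlinarith
    calc Real.exp (-(n:ℝ) * (h + δ)) ≤ Real.exp (Real.log ((m n).toReal)) :=
          Real.exp_le_exp.2 hlt.le
      _ = (m n).toReal := Real.exp_log hm0
  · have hlt : Real.log ((m n).toReal) < -(↑n : ℝ) * (h - δ) := by nlinarith
    calc (m n).toReal = Real.exp (Real.log ((m n).toReal)) := (Real.exp_log hm0).symm
      _ ≤ Real.exp (-(n:ℝ) * (h - δ)) := Real.exp_le_exp.2 hlt.le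

lemma ae_cyl_pos (T : Ω → Ω) (P : Ω → ℕ) (μ : Measure Ω) (n : ℕ) :
    ∀ᵐ z ∂μ, μ (cylAt T P n z) ≠ 0 := by
  rw [ae_iff]
  have hsub : {z | ¬ μ (cylAt T P n z) ≠ 0} ⊆
      ⋃ w : {w : Fin n → ℕ // μ (cylW T P n w) = 0}, cylW T P n (w : Fin n → ℕ) := by
    intro z hz
    simp only [mem_setOf_eq, not_not] at hz
    rw [cylAt_eq_cylW] at hz
    exact mem_iUnion.2 ⟨⟨wordMap T P n z, hz⟩, mem_cylW_iff.2 rfl⟩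
  exact measure_mono_null hsub (measure_iUnion_null fun w => w.2)

end EntAux

end EntAuxSection

/-- If for a.e. `z` the limiting entrance-time distribution `F_z(t) = lim_n F_z^n(t)` exists
for all `t ≥ 0` and `F_z(t) → 0` as `t → ∞`, then `(1/n) log τ_{A_n(z)}(x) → h_μ`
in probability w.r.t. `μ × μ`. -/
theorem entranceTime_tendsto_entropy_inProbability
    (μ : Measure Ω) [IsProbabilityMeasure μ] (T : Ω → Ω) (P : Ω → ℕ)
    (hP : Measurable P) (herg : Ergodic T μ) (hgen : GeneratingPartition T P μ)
    (h : ℝ) (hh : 0 ≤ h) (hSMB : SMB T P μ h)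
    (F : Ω → ℝ → ℝ)
    (hF : ∀ᵐ z ∂μ,
      (∀ t : ℝ, 0 ≤ t → Tendsto (fun n : ℕ => Fdist T P μ z n t) atTop (nhds (F z t))) ∧
      Tendsto (F z) atTop (nhds 0)) :
    ∀ ε > (0 : ℝ), Tendsto (fun n : ℕ =>
        (μ.prod μ) {p : Ω × Ω |
          ε < |Real.log (hitTime T (cylAt T P n p.2) p.1) / n - h|})
      atTop (nhds 0) := by
    classical
  intro ε hε
  have hT : Measurable T := herg.toMeasurePreserving.measurable
  set R₁ : ℕ → ℝ := fun n => Real.exp ((n:ℝ) * (h - ε)) with hR₁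
  set R₂ : ℕ → ℝ := fun n => Real.exp ((n:ℝ) * (h + ε)) with hR₂
  set θ : ℕ → ℝ≥0∞ := fun n => ENNReal.ofReal (Real.exp (-(n:ℝ) * (h - ε/2))) with hθ
  set Bs : ℕ → Set Ω := fun n => {y | θ n < μ (cylAt T P n y)} with hBs
  set M : ℕ → ℕ := fun n => ⌊R₁ n⌋₊ with hM
  set Ls : ℕ → Set (Ω × Ω) := fun n => {p | 1 ≤ hitTime T (cylAt T P n p.2) p.1 ∧
      hitTime T (cylAt T P n p.2) p.1 ≤ M n} with hLs
  set Us : ℕ → Set (Ω × Ω) := fun n => {p | R₂ n < (hitTime T (cylAt T P n p.2) p.1 : ℝ)}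
    with hUs
  set Zs : ℕ → Set (Ω × Ω) := fun n => {p | hitTime T (cylAt T P n p.2) p.1 = 0} with hZs
  have hLm : ∀ n, MeasurableSet (Ls n) := fun n =>
    (EntAux.measurable_tau hT hP n) (MeasurableSet.of_discrete (s := {k : ℕ | 1 ≤ k ∧ k ≤ M n}))
  have hUm : ∀ n, MeasurableSet (Us n) := fun n =>
    (EntAux.measurable_tau hT hP n) (MeasurableSet.of_discrete (s := {k : ℕ | R₂ n < (k:ℝ)}))
  have hZm : ∀ n, MeasurableSet (Zs n) := fun n =>
    (EntAux.measurable_tau hT hP n) (MeasurableSet.of_discrete (s := {(0:ℕ)}))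
  -- the `Z` part has measure zero
  have hZ : ∀ n, (μ.prod μ) (Zs n) = 0 := by
    intro n
    rw [Measure.prod_apply_symm (hZm n)]
    have hae : ∀ᵐ z ∂μ, μ ((fun x => (x, z)) ⁻¹' Zs n) = 0 := by
      filter_upwards [EntAux.ae_cyl_pos T P μ n] with z hz
      have hhit := EntAux.ae_exists_hit herg (EntAux.measurableSet_cylAt hT hP
        (x := z) (n := n)) hz
      refine measure_mono_null ?_ (ae_iff.mp hhit)
      intro x hx
      have hx' : hitTime T (cylAt T P n z) x = 0 := hx
      have hall := EntAux.hitTime_eq_zero_iff.1 hx'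
      simp only [mem_setOf_eq]
      rintro ⟨i, hi, hmem⟩
      exact hall i hi hmem
    calc ∫⁻ z, μ ((fun x => (x, z)) ⁻¹' Zs n) ∂μ = ∫⁻ _, 0 ∂μ := lintegral_congr_ae hae
      _ = 0 := lintegral_zero
  -- the set of points with "large" cylinders has small measure
  have hB : Tendsto (fun n => μ (Bs n)) atTop (nhds 0) := by
    have hBm : ∀ n, MeasurableSet (Bs n) := by
      intro n
      have heq : Bs n = EntAux.wordMap T P n ⁻¹' {w | θ n < μ (cylW T P n w)} := by
        ext y
        simp only [hBs, mem_setOf_eq, mem_preimage, EntAux.cylAt_eq_cylW]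
      rw [heq]; exact EntAux.measurableSet_wordMap_preimage hT hP _
    have hlim : ∀ᵐ y ∂μ, ∀ᶠ n in atTop, (y ∈ Bs n ↔ y ∈ (∅ : Set Ω)) := by
      filter_upwards [hSMB] with y hy
      simp only [mem_empty_iff_false, iff_false]
      by_cases hz : ∀ m, μ (cylAt T P m y) ≠ 0
      · have hsb := EntAux.smb_bounds (fun m => measure_ne_top μ _) hy hz
          (show (0:ℝ) < ε/4 by positivity)
        filter_upwards [hsb] with n hn
        simp only [hBs, mem_setOf_eq, not_lt, hθ]
        have heq : μ (cylAt T P n y) = ENNReal.ofReal ((μ (cylAt T P n y)).toReal) :=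
          (ENNReal.ofReal_toReal (measure_ne_top μ _)).symm
        rw [heq]
        apply ENNReal.ofReal_le_ofReal
        refine hn.2.trans (Real.exp_le_exp.2 ?_)
        have hc : (0:ℝ) ≤ n := Nat.cast_nonneg n
        nlinarith
      · push_neg at hz
        obtain ⟨n₀, hn₀⟩ := hz
        filter_upwards [eventually_ge_atTop n₀] with n hn
        have h0 : μ (cylAt T P n y) = 0 :=
          measure_mono_null (EntAux.cylAt_anti T P hn y) hn₀
        simp [hBs, mem_setOf_eq, h0]
    have := MeasureTheory.tendsto_measure_of_ae_tendsto_indicator_of_isFiniteMeasure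
      atTop MeasurableSet.empty hBm hlim
    simpa using this
  -- the lower-deviation part
  have hLbound : ∀ n, (μ.prod μ) (Ls n) ≤ μ (Bs n) + (M n : ℝ≥0∞) * θ n := by
    intro n
    rw [Measure.prod_apply (hLm n)]
    have hsec : ∀ x : Ω, μ (Prod.mk x ⁻¹' Ls n) ≤ μ (Bs n) + (M n : ℝ≥0∞) * θ n := by
      intro x
      set D : ℕ → Set Ω := fun i => cylAt T P n (T^[i] x) with hD
      have hsub : Prod.mk x ⁻¹' Ls n ⊆
          Bs n ∪ ⋃ i ∈ Finset.Icc 1 (M n), (if μ (D i) ≤ θ n then D i else ∅) := by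
        intro z hz
        obtain ⟨h1, h2⟩ := hz
        have h1' : 1 ≤ hitTime T (cylAt T P n z) x := h1
        have h2' : hitTime T (cylAt T P n z) x ≤ M n := h2
        have h0 : hitTime T (cylAt T P n z) x ≠ 0 := by omega
        obtain ⟨hk1, hmem⟩ := EntAux.hitTime_spec h0
        by_cases hsmall : μ (D (hitTime T (cylAt T P n z) x)) ≤ θ n
        · right
          refine mem_biUnion (Finset.mem_Icc.2 ⟨h1', h2'⟩) ?_
          rw [if_pos hsmall]
          exact EntAux.mem_cylAt_symm hmem
        · left
          have heqc : cylAt T P n z = D (hitTime T (cylAt T P n z) x) :=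
            EntAux.cylAt_eq_of_mem (EntAux.mem_cylAt_symm hmem)
          show θ n < μ (cylAt T P n z)
          rw [heqc]
          exact lt_of_not_ge hsmall
      calc μ (Prod.mk x ⁻¹' Ls n)
          ≤ μ (Bs n) + μ (⋃ i ∈ Finset.Icc 1 (M n), (if μ (D i) ≤ θ n then D i else ∅)) :=
            (measure_mono hsub).trans (measure_union_le _ _)
        _ ≤ μ (Bs n) + (M n : ℝ≥0∞) * θ n := by
            refine add_le_add_right ?_ _
            calc μ (⋃ i ∈ Finset.Icc 1 (M n), (if μ (D i) ≤ θ n then D i else ∅))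
                ≤ ∑ i ∈ Finset.Icc 1 (M n), μ (if μ (D i) ≤ θ n then D i else ∅) :=
                  measure_biUnion_finset_le _ _
              _ ≤ ∑ _i ∈ Finset.Icc 1 (M n), θ n := by
                  refine Finset.sum_le_sum fun i _ => ?_
                  split
                  · assumption
                  · simp
              _ = (M n : ℝ≥0∞) * θ n := by
                  rw [Finset.sum_const, Nat.card_Icc]
                  simp [nsmul_eq_mul]
    calc ∫⁻ x, μ (Prod.mk x ⁻¹' Ls n) ∂μ
        ≤ ∫⁻ _, (μ (Bs n) + (M n : ℝ≥0∞) * θ n) ∂μ := lintegral_mono hsec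
      _ = μ (Bs n) + (M n : ℝ≥0∞) * θ n := by simp
  have hMθ : ∀ n, (M n : ℝ≥0∞) * θ n ≤ ENNReal.ofReal (Real.exp (-(n:ℝ) * (ε/2))) := by
    intro n
    have h1 : (M n : ℝ≥0∞) ≤ ENNReal.ofReal (R₁ n) := by
      rw [← ENNReal.ofReal_natCast]
      exact ENNReal.ofReal_le_ofReal (Nat.floor_le (Real.exp_nonneg _))
    calc (M n : ℝ≥0∞) * θ n ≤ ENNReal.ofReal (R₁ n) * θ n := by
          exact mul_le_mul_left h1 _
      _ = ENNReal.ofReal (R₁ n * Real.exp (-(n:ℝ) * (h - ε/2))) :=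
          (ENNReal.ofReal_mul (Real.exp_nonneg _)).symm
      _ = ENNReal.ofReal (Real.exp (-(n:ℝ) * (ε/2))) := by
          rw [hR₁]
          simp only []
          rw [← Real.exp_add]
          congr 1
          ring
  have hexp0 : Tendsto (fun n : ℕ => ENNReal.ofReal (Real.exp (-(n:ℝ) * (ε/2))))
      atTop (nhds 0) := by
    have hnn : Tendsto (fun n : ℕ => (n:ℝ) * (ε/2)) atTop atTop :=
      Tendsto.atTop_mul_const (by positivity) tendsto_natCast_atTop_atTop
    have h1 : Tendsto (fun n : ℕ => -((n:ℝ) * (ε/2))) atTop atBot :=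
      tendsto_neg_atTop_atBot.comp hnn
    have h2 : Tendsto (fun n : ℕ => Real.exp (-((n:ℝ) * (ε/2)))) atTop (nhds 0) :=
      Real.tendsto_exp_atBot.comp h1
    have h3 := ENNReal.tendsto_ofReal h2
    simpa [neg_mul] using h3
  have hL : Tendsto (fun n => (μ.prod μ) (Ls n)) atTop (nhds 0) := by
    have hb : Tendsto (fun n => μ (Bs n) + ENNReal.ofReal (Real.exp (-(n:ℝ) * (ε/2))))
        atTop (nhds 0) := by
      have := hB.add hexp0
      simpa using this
    refine tendsto_of_tendsto_of_tendsto_of_le_of_le tendsto_const_nhds hb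
      (fun n => zero_le) (fun n => ?_)
    exact (hLbound n).trans (add_le_add_right (hMθ n) _)
  -- the upper-deviation part
  have hU : Tendsto (fun n => (μ.prod μ) (Us n)) atTop (nhds 0) := by
    set g : ℕ → Ω → ℝ≥0∞ := fun n z => μ ((fun x => (x, z)) ⁻¹' Us n) with hg
    have hgm : ∀ n, Measurable (g n) := by
      intro n
      have heq : g n = fun z =>
          (fun w => μ {x | R₂ n < (hitTime T (cylW T P n w) x : ℝ)})
            (EntAux.wordMap T P n z) := by
        funext z
        show μ ((fun x => (x, z)) ⁻¹' Us n) = _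
        have hpre : (fun x => (x, z)) ⁻¹' Us n
            = {x | R₂ n < (hitTime T (cylAt T P n z) x : ℝ)} := rfl
        rw [hpre, EntAux.cylAt_eq_cylW]
      rw [heq]
      exact EntAux.measurable_comp_wordMap hT hP
        (fun w => μ {x | R₂ n < (hitTime T (cylW T P n w) x : ℝ)})
    have hlim : ∀ᵐ z ∂μ, Tendsto (fun n => g n z) atTop (nhds ((fun _ : Ω => (0:ℝ≥0∞)) z)) := by
      filter_upwards [hSMB, hF] with z hy hFz
      obtain ⟨hF1, hF2⟩ := hFz
      show Tendsto (fun n => g n z) atTop (nhds 0)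
      by_cases hz : ∀ m, μ (cylAt T P m z) ≠ 0
      · rw [ENNReal.tendsto_nhds_zero]
        intro η hη
        have hmin0 : (0:ℝ≥0∞) < min 1 η := lt_min one_pos hη
        have hmintop : min 1 η ≠ ⊤ :=
          ((min_le_left _ _).trans_lt ENNReal.one_lt_top).ne
        set r : ℝ := (min 1 η).toReal with hr
        have hr0 : 0 < r := ENNReal.toReal_pos hmin0.ne' hmintop
        have hrη : ENNReal.ofReal r ≤ η := by
          rw [hr, ENNReal.ofReal_toReal hmintop]
          exact min_le_right _ _
        obtain ⟨t₀, ht₀, ht₀0⟩ : ∃ t₀, |F z t₀| < r/2 ∧ (0:ℝ) ≤ t₀ := by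
          have h1 : ∀ᶠ t in atTop, dist (F z t) 0 < r/2 :=
            Metric.tendsto_nhds.mp hF2 (r/2) (by positivity)
          obtain ⟨t₀, ha, hb⟩ := (h1.and (eventually_ge_atTop (0:ℝ))).exists
          exact ⟨t₀, by simpa [Real.dist_eq] using ha, hb⟩
        have hFd : ∀ᶠ n in atTop, dist (Fdist T P μ z n t₀) (F z t₀) < r/2 :=
          Metric.tendsto_nhds.mp (hF1 t₀ ht₀0) (r/2) (by positivity)
        have hsb := EntAux.smb_bounds (fun m => measure_ne_top μ _) hy hz
          (show (0:ℝ) < ε/2 by positivity)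
        have hexp : ∀ᶠ n : ℕ in atTop, t₀ ≤ Real.exp ((n:ℝ) * (ε/2)) := by
          have hnn : Tendsto (fun n : ℕ => (n:ℝ) * (ε/2)) atTop atTop :=
            Tendsto.atTop_mul_const (by positivity) tendsto_natCast_atTop_atTop
          exact (Real.tendsto_exp_atTop.comp hnn).eventually_ge_atTop t₀
        filter_upwards [hFd, hsb, hexp] with n hn1 hn2 hn3
        have hm0 : 0 < (μ (cylAt T P n z)).toReal :=
          ENNReal.toReal_pos (hz n) (measure_ne_top μ _)
        have hkey : t₀ / (μ (cylAt T P n z)).toReal ≤ R₂ n := by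
          rw [div_le_iff₀ hm0]
          calc t₀ ≤ Real.exp ((n:ℝ) * (ε/2)) := hn3
            _ = R₂ n * Real.exp (-(n:ℝ) * (h + ε/2)) := by
                rw [hR₂]
                simp only []
                rw [← Real.exp_add]
                congr 1
                ring
            _ ≤ R₂ n * (μ (cylAt T P n z)).toReal :=
                mul_le_mul_of_nonneg_left hn2.1 (Real.exp_nonneg _)
        have hsub : (fun x => (x, z)) ⁻¹' Us n ⊆
            {x | t₀ / (μ (cylAt T P n z)).toReal ≤ (hitTime T (cylAt T P n z) x : ℝ)} := by
          intro x hx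
          have hx' : R₂ n < (hitTime T (cylAt T P n z) x : ℝ) := hx
          exact le_trans hkey hx'.le
        calc g n z ≤ μ {x | t₀ / (μ (cylAt T P n z)).toReal ≤
              (hitTime T (cylAt T P n z) x : ℝ)} := measure_mono hsub
          _ = ENNReal.ofReal (Fdist T P μ z n t₀) :=
              (ENNReal.ofReal_toReal (measure_ne_top μ _)).symm
          _ ≤ ENNReal.ofReal r := by
              apply ENNReal.ofReal_le_ofReal
              rw [Real.dist_eq] at hn1
              have ha := (abs_lt.1 hn1).2
              have hb := (abs_lt.1 ht₀).2
              linarith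
          _ ≤ η := hrη
      · push_neg at hz
        obtain ⟨n₀, hn₀⟩ := hz
        have hev : ∀ᶠ n in atTop, g n z = 0 := by
          filter_upwards [eventually_ge_atTop n₀] with n hn
          have h0 : μ (cylAt T P n z) = 0 :=
            measure_mono_null (EntAux.cylAt_anti T P hn z) hn₀
          have hsub : (fun x => (x, z)) ⁻¹' Us n ⊆
              ⋃ i : ℕ, T^[i+1] ⁻¹' (cylAt T P n z) := by
            intro x hx
            have hx' : R₂ n < (hitTime T (cylAt T P n z) x : ℝ) := hx
            have hne : hitTime T (cylAt T P n z) x ≠ 0 := by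
              intro hc
              rw [hc] at hx'
              norm_num at hx'
              exact absurd hx' (not_lt.2 (by rw [hR₂]; positivity))
            obtain ⟨h1, h2⟩ := EntAux.hitTime_spec hne
            refine mem_iUnion.2 ⟨hitTime T (cylAt T P n z) x - 1, ?_⟩
            have hee : hitTime T (cylAt T P n z) x - 1 + 1
                = hitTime T (cylAt T P n z) x := by omega
            rw [mem_preimage, hee]
            exact h2
          refine le_antisymm ((measure_mono hsub).trans (le_of_eq ?_)) zero_le
          refine measure_iUnion_null fun i => ?_
          rw [(herg.toMeasurePreserving.iterate (i+1)).measure_preimage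
            (EntAux.measurableSet_cylAt hT hP).nullMeasurableSet]
          exact h0
        exact Tendsto.congr' (hev.mono fun n hn => hn.symm) tendsto_const_nhds
    have hdct := tendsto_lintegral_of_dominated_convergence (μ := μ)
      (bound := fun _ => 1) hgm (fun n => Eventually.of_forall fun z => prob_le_one)
      (by simp) hlim
    have heq : (fun n => (μ.prod μ) (Us n)) = fun n => ∫⁻ z, g n z ∂μ :=
      funext fun n => Measure.prod_apply_symm (hUm n)
    rw [heq]
    simpa using hdct
  -- assembling everything
  have hsum : Tendsto (fun n => (μ.prod μ) (Ls n) + (μ.prod μ) (Us n)) atTop (nhds 0) := by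
    have := hL.add hU
    simpa using this
  refine tendsto_of_tendsto_of_tendsto_of_le_of_le' tendsto_const_nhds hsum
    (Eventually.of_forall fun n => zero_le) ?_
  filter_upwards [eventually_ge_atTop 1] with n hn
  have hsubset : {p : Ω × Ω | ε < |Real.log (hitTime T (cylAt T P n p.2) p.1) / n - h|}
      ⊆ Zs n ∪ (Ls n ∪ Us n) := by
    intro p hp
    have hp' : ε < |Real.log (hitTime T (cylAt T P n p.2) p.1) / n - h| := hp
    set k := hitTime T (cylAt T P n p.2) p.1 with hk
    rcases Nat.eq_zero_or_pos k with hk0 | hkpos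
    · left; exact hk0
    · right
      have hk1 : (1:ℝ) ≤ (k:ℝ) := by exact_mod_cast hkpos
      have hkR : (0:ℝ) < (k:ℝ) := by linarith
      have hnpos : (0:ℝ) < (n:ℝ) := by exact_mod_cast hn
      rcases abs_cases (Real.log (k:ℝ) / n - h) with ⟨habs, _⟩ | ⟨habs, _⟩
      · -- upper deviation
        rw [habs] at hp'
        right
        show R₂ n < (k:ℝ)
        have hlog : (n:ℝ) * (h + ε) < Real.log (k:ℝ) := by
          have hdiv : h + ε < Real.log (k:ℝ) / n := by linarith
          calc (n:ℝ) * (h + ε) < (n:ℝ) * (Real.log (k:ℝ) / n) :=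
                mul_lt_mul_of_pos_left hdiv hnpos
            _ = Real.log (k:ℝ) := by field_simp
        calc R₂ n = Real.exp ((n:ℝ) * (h + ε)) := by rw [hR₂]
          _ < Real.exp (Real.log (k:ℝ)) := Real.exp_lt_exp.2 hlog
          _ = (k:ℝ) := Real.exp_log hkR
      · -- lower deviation
        rw [habs] at hp'
        left
        refine ⟨hkpos, ?_⟩
        have hlog : Real.log (k:ℝ) < (n:ℝ) * (h - ε) := by
          have hdiv : Real.log (k:ℝ) / n < h - ε := by linarith
          calc Real.log (k:ℝ) = (n:ℝ) * (Real.log (k:ℝ) / n) := by field_simp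
            _ < (n:ℝ) * (h - ε) := mul_lt_mul_of_pos_left hdiv hnpos
        apply Nat.le_floor
        calc (k:ℝ) = Real.exp (Real.log (k:ℝ)) := (Real.exp_log hkR).symm
          _ ≤ Real.exp ((n:ℝ) * (h - ε)) := Real.exp_le_exp.2 hlog.le
  calc (μ.prod μ) {p : Ω × Ω | ε < |Real.log (hitTime T (cylAt T P n p.2) p.1) / n - h|}
      ≤ (μ.prod μ) (Zs n ∪ (Ls n ∪ Us n)) := measure_mono hsubset
    _ ≤ (μ.prod μ) (Zs n) + (μ.prod μ) (Ls n ∪ Us n) := measure_union_le _ _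
    _ ≤ (μ.prod μ) (Zs n) + ((μ.prod μ) (Ls n) + (μ.prod μ) (Us n)) :=
        add_le_add_right (measure_union_le _ _) _
    _ = (μ.prod μ) (Ls n) + (μ.prod μ) (Us n) := by rw [hZ n, zero_add]
end

section
/- Suppose that for all small enough ε > 0 one has Σ_{n=1}^∞ ∫_Ω F_z^n(e^{nε}) dμ(z) < ∞. Then lim_{n→∞} (1/n) log τ_{A_n(z)}(x) = h_μ for μ × μ-almost every (x,z) ∈ Ω × Ω. -/
open MeasureTheory Filter Set
open scoped ENNReal
set_option linter.unusedSectionVars false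
set_option maxHeartbeats 1000000

variable {Ω : Type*} [MeasurableSpace Ω]

namespace ETEaux

/-- The word of length `n` of the point `z`. -/
def wd (T : Ω → Ω) (P : Ω → ℕ) (n : ℕ) (z : Ω) : Fin n → ℕ := fun i => P (T^[(i : ℕ)] z)

variable {T : Ω → Ω} {P : Ω → ℕ}

lemma mem_cylW_wd (n : ℕ) (z : Ω) : z ∈ cylW T P n (wd T P n z) := fun _ => rfl

lemma wd_eq_of_mem {n : ℕ} {w : Fin n → ℕ} {z : Ω} (hz : z ∈ cylW T P n w) :
    wd T P n z = w := funext fun i => hz i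

lemma cylAt_eq (n : ℕ) (z : Ω) : cylAt T P n z = cylW T P n (wd T P n z) := by
  ext y
  constructor
  · intro hy i; exact hy i i.2
  · intro hy i hi; exact hy ⟨i, hi⟩

lemma measurable_wd (hT : Measurable T) (hP : Measurable P) (n : ℕ) :
    Measurable (wd T P n) :=
  measurable_pi_lambda _ fun i => hP.comp (hT.iterate i)

lemma measurableSet_cylW (hT : Measurable T) (hP : Measurable P) (n : ℕ) (w : Fin n → ℕ) :
    MeasurableSet (cylW T P n w) := by
  have : cylW T P n w = ⋂ i : Fin n, (fun y => P (T^[(i : ℕ)] y)) ⁻¹' {w i} := by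
    ext y; simp [cylW]
  rw [this]
  exact MeasurableSet.iInter fun i =>
    (hP.comp (hT.iterate i)) (measurableSet_singleton _)

lemma cylW_disjoint (n : ℕ) : Pairwise (Function.onFun Disjoint (fun w => cylW T P n w)) := by
  intro w w' hne
  rw [Function.onFun, Set.disjoint_left]
  intro x hx hx'
  exact hne (funext fun i => (hx i).symm.trans (hx' i))

lemma tsum_cylW_le (μ : Measure Ω) [IsProbabilityMeasure μ]
    (hT : Measurable T) (hP : Measurable P) (n : ℕ) :
    ∑' w : Fin n → ℕ, μ (cylW T P n w) ≤ 1 := by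
  rw [← measure_iUnion (cylW_disjoint n) (measurableSet_cylW hT hP n)]
  exact prob_le_one

lemma hitTime_eq_zero_iff {A : Set Ω} {x : Ω} :
    hitTime T A x = 0 ↔ ∀ i, ¬(1 ≤ i ∧ T^[i] x ∈ A) := by
  rw [hitTime, Nat.sInf_eq_zero]
  constructor
  · rintro (h | h)
    · exact absurd h.1 (by norm_num)
    · intro i hi; rw [Set.eq_empty_iff_forall_notMem] at h; exact h i hi
  · intro h; right; exact Set.eq_empty_iff_forall_notMem.2 h

lemma hitTime_spec {A : Set Ω} {x : Ω} (h : 1 ≤ hitTime T A x) :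
    T^[hitTime T A x] x ∈ A := by
  have hne : {i | 1 ≤ i ∧ T^[i] x ∈ A}.Nonempty := by
    by_contra hc
    rw [Set.not_nonempty_iff_eq_empty] at hc
    have : hitTime T A x = 0 := by rw [hitTime, hc, Nat.sInf_empty]
    omega
  exact (Nat.sInf_mem hne).2

lemma measurable_hitTime (hT : Measurable T) {A : Set Ω} (hA : MeasurableSet A) :
    Measurable (hitTime T A) := by
  apply measurable_to_countable'
  intro k
  match k with
  | 0 =>
    have : hitTime T A ⁻¹' {0} = ⋂ i : ℕ, {x | ¬(1 ≤ i ∧ T^[i] x ∈ A)} := by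
      ext x
      simp only [Set.mem_preimage, Set.mem_singleton_iff, Set.mem_iInter, Set.mem_setOf_eq,
        hitTime_eq_zero_iff]
    rw [this]
    refine MeasurableSet.iInter fun i => ?_
    by_cases hi : 1 ≤ i
    · have : {x : Ω | ¬(1 ≤ i ∧ T^[i] x ∈ A)} = (T^[i] ⁻¹' A)ᶜ := by
        ext x; simp [hi]
      rw [this]; exact ((hT.iterate i) hA).compl
    · have : {x : Ω | ¬(1 ≤ i ∧ T^[i] x ∈ A)} = Set.univ := by
        ext x; simp [hi]
      rw [this]; exact MeasurableSet.univ
  | k + 1 =>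
    have hiff : ∀ x : Ω, hitTime T A x = k + 1 ↔
        T^[k+1] x ∈ A ∧ ∀ j, 1 ≤ j → j ≤ k → T^[j] x ∉ A := by
      intro x
      constructor
      · intro hk
        have h1 : 1 ≤ hitTime T A x := by omega
        refine ⟨hk ▸ hitTime_spec h1, fun j hj1 hjk hjA => ?_⟩
        have : j ∉ {i | 1 ≤ i ∧ T^[i] x ∈ A} :=
          Nat.notMem_of_lt_sInf (by rw [hitTime] at hk; omega)
        exact this ⟨hj1, hjA⟩
      · rintro ⟨hmem, hlt⟩
        have hin : k + 1 ∈ {i | 1 ≤ i ∧ T^[i] x ∈ A} := ⟨by omega, hmem⟩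
        have hle : hitTime T A x ≤ k + 1 := Nat.sInf_le hin
        have h1 : 1 ≤ hitTime T A x := by
          by_contra hc
          have h0 : hitTime T A x = 0 := by omega
          exact (hitTime_eq_zero_iff.1 h0) (k+1) hin
        have hmem' := hitTime_spec (T := T) (A := A) (x := x) h1
        by_contra hne
        exact hlt _ h1 (by omega) hmem'
    have : hitTime T A ⁻¹' {k+1} =
        (T^[k+1] ⁻¹' A) ∩ ⋂ j : Fin (k+1), {x | ¬(1 ≤ (j:ℕ) ∧ T^[(j:ℕ)] x ∈ A)} := by
      ext x
      simp only [Set.mem_preimage, Set.mem_singleton_iff, hiff, Set.mem_inter_iff,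
        Set.mem_iInter, Set.mem_setOf_eq]
      constructor
      · rintro ⟨h1, h2⟩
        exact ⟨h1, fun j hj => h2 j hj.1 (by omega) hj.2⟩
      · rintro ⟨h1, h2⟩
        exact ⟨h1, fun j hj1 hjk hjA => h2 ⟨j, by omega⟩ ⟨hj1, hjA⟩⟩
    rw [this]
    exact ((hT.iterate (k+1)) hA).inter
      (MeasurableSet.iInter fun j => by
        by_cases hj : 1 ≤ (j:ℕ)
        · have : {x : Ω | ¬(1 ≤ (j:ℕ) ∧ T^[(j:ℕ)] x ∈ A)} = (T^[(j:ℕ)] ⁻¹' A)ᶜ := by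
            ext x; simp [hj]
          rw [this]; exact ((hT.iterate _) hA).compl
        · have : {x : Ω | ¬(1 ≤ (j:ℕ) ∧ T^[(j:ℕ)] x ∈ A)} = Set.univ := by
            ext x; simp [hj]
          rw [this]; exact MeasurableSet.univ)

lemma ae_one_le_hitTime {μ : Measure Ω} [IsProbabilityMeasure μ]
    (herg : Ergodic T μ) {A : Set Ω} (hA : MeasurableSet A) (h0 : μ A ≠ 0) :
    ∀ᵐ x ∂μ, 1 ≤ hitTime T A x := by
  have hT : Measurable T := herg.measurable
  set B : Set Ω := ⋃ i : ℕ, T^[i+1] ⁻¹' A with hB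
  have hBm : MeasurableSet B := MeasurableSet.iUnion fun i => (hT.iterate (i+1)) hA
  have hsub : T ⁻¹' B ⊆ B := by
    rintro x hx
    simp only [hB, Set.mem_preimage, Set.mem_iUnion] at hx ⊢
    obtain ⟨i, hi⟩ := hx
    exact ⟨i + 1, by rw [← Function.iterate_succ_apply] at hi; exact hi⟩
  have hBA : μ A ≤ μ B := by
    have hsub' : T ⁻¹' A ⊆ B := by
      intro x hx; exact Set.mem_iUnion.2 ⟨0, by simpa using hx⟩
    calc μ A = μ (T ⁻¹' A) :=
      (herg.toMeasurePreserving.measure_preimage hA.nullMeasurableSet).symm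
    _ ≤ μ B := measure_mono hsub'
  have := herg.ae_empty_or_univ_of_preimage_ae_le' hBm.nullMeasurableSet
    (HasSubset.Subset.eventuallyLE hsub) (measure_ne_top μ B)
  rcases this with hb | hb
  · exfalso
    have : μ B = 0 := by simpa using measure_congr hb
    exact h0 (le_antisymm (this ▸ hBA) zero_le)
  · have hmem : ∀ᵐ x ∂μ, x ∈ B := by
      filter_upwards [hb] with x hx
      simp only [eq_iff_iff] at hx
      exact hx.2 trivial
    filter_upwards [hmem] with x hx
    obtain ⟨i, hi⟩ := Set.mem_iUnion.1 hx
    have hne : {j | 1 ≤ j ∧ T^[j] x ∈ A}.Nonempty := ⟨i+1, by omega, hi⟩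
    exact (Nat.sInf_mem hne).1

lemma pair_eq_iUnion (n : ℕ) (S : (Fin n → ℕ) → Set Ω) :
    {p : Ω × Ω | p.1 ∈ S (wd T P n p.2)} = ⋃ w : Fin n → ℕ, (S w) ×ˢ cylW T P n w := by
  ext ⟨x, z⟩
  simp only [Set.mem_setOf_eq, Set.mem_iUnion, Set.mem_prod]
  constructor
  · intro hx; exact ⟨wd T P n z, hx, mem_cylW_wd n z⟩
  · rintro ⟨w, hx, hz⟩; rwa [wd_eq_of_mem hz]

lemma measurableSet_pair (hT : Measurable T) (hP : Measurable P) (n : ℕ)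
    {S : (Fin n → ℕ) → Set Ω} (hS : ∀ w, MeasurableSet (S w)) :
    MeasurableSet {p : Ω × Ω | p.1 ∈ S (wd T P n p.2)} := by
  rw [pair_eq_iUnion]
  exact MeasurableSet.iUnion fun w => (hS w).prod (measurableSet_cylW hT hP n w)

lemma pair_measure_le (μ : Measure Ω) [SFinite μ] (n : ℕ) (S : (Fin n → ℕ) → Set Ω) :
    (μ.prod μ) {p : Ω × Ω | p.1 ∈ S (wd T P n p.2)} ≤
      ∑' w : Fin n → ℕ, μ (S w) * μ (cylW T P n w) := by
  rw [pair_eq_iUnion]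
  refine (measure_iUnion_le _).trans ?_
  exact le_of_eq (tsum_congr fun w => Measure.prod_prod _ _)

lemma pair_measure_eq (μ : Measure Ω) [SFinite μ] (hT : Measurable T) (hP : Measurable P)
    (n : ℕ) {S : (Fin n → ℕ) → Set Ω} (hS : ∀ w, MeasurableSet (S w)) :
    (μ.prod μ) {p : Ω × Ω | p.1 ∈ S (wd T P n p.2)} =
      ∫⁻ z, μ (S (wd T P n z)) ∂μ := by
  rw [Measure.prod_apply_symm (measurableSet_pair hT hP n hS)]
  rfl

lemma measurable_sectmeas (μ : Measure Ω) (hT : Measurable T) (hP : Measurable P)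
    (n : ℕ) (S : (Fin n → ℕ) → Set Ω) :
    Measurable fun z => μ (S (wd T P n z)) :=
  (measurable_of_countable (fun w => μ (S w))).comp (measurable_wd hT hP n)

lemma ae_cyl_pos (μ : Measure Ω) (hT : Measurable T) (hP : Measurable P) :
    ∀ᵐ z ∂μ, ∀ n, μ (cylAt T P n z) ≠ 0 := by
  rw [ae_all_iff]
  intro n
  rw [ae_iff]
  push_neg
  refine measure_mono_null (fun z hz => ?_)
    (measure_iUnion_null (s := fun w : {w : Fin n → ℕ // μ (cylW T P n w) = 0} =>
      cylW T P n w.1) fun w => w.2)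
  simp only [Set.mem_setOf_eq, not_not] at hz
  have hz' : μ (cylW T P n (wd T P n z)) = 0 := by rwa [← cylAt_eq]
  exact Set.mem_iUnion.2 ⟨⟨wd T P n z, hz'⟩, mem_cylW_wd n z⟩

lemma prod_null_of_sections (μ : Measure Ω) [SFinite μ] {s : Set (Ω × Ω)}
    (hs : MeasurableSet s) (h : ∀ᵐ z ∂μ, μ {x | (x, z) ∈ s} = 0) :
    (μ.prod μ) s = 0 := by
  rw [Measure.prod_apply_symm hs]
  have h' : ∀ᵐ z ∂μ, μ ((fun x => (x, z)) ⁻¹' s) = 0 := h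
  rw [lintegral_congr_ae (g := fun _ => 0) h', lintegral_zero]

lemma ae_snd' (μ : Measure Ω) [IsProbabilityMeasure μ] {Q : Ω → Prop}
    (hQ : ∀ᵐ z ∂μ, Q z) : ∀ᵐ p ∂(μ.prod μ), Q p.2 := by
  rw [ae_iff] at hQ ⊢
  have : {p : Ω × Ω | ¬Q p.2} = Set.univ ×ˢ {z | ¬Q z} := by
    ext p; simp
  rw [this, Measure.prod_prod, hQ, mul_zero]

lemma upper_claim (μ : Measure Ω) [IsProbabilityMeasure μ]
    (hT : Measurable T) (hP : Measurable P) (ε : ℝ)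
    (hsum : Summable (fun n : ℕ => ∫ z, Fdist T P μ z n (Real.exp ((n : ℝ) * ε)) ∂μ)) :
    ∀ᵐ p ∂(μ.prod μ), ∀ᶠ n : ℕ in atTop,
      ¬ (Real.exp ((n : ℝ) * ε) / (μ (cylAt T P n p.2)).toReal ≤
          ((hitTime T (cylAt T P n p.2) p.1 : ℕ) : ℝ)) := by
  set SU : (n : ℕ) → (Fin n → ℕ) → Set Ω := fun n w =>
    {x | Real.exp ((n : ℝ) * ε) / (μ (cylW T P n w)).toReal ≤
      ((hitTime T (cylW T P n w) x : ℕ) : ℝ)} with hSU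
  have hSUm : ∀ n w, MeasurableSet (SU n w) := fun n w =>
    measurableSet_le measurable_const
      ((measurable_of_countable (fun k : ℕ => (k : ℝ))).comp
        (measurable_hitTime hT (measurableSet_cylW hT hP n w)))
  set E : ℕ → Set (Ω × Ω) := fun n => {p | p.1 ∈ SU n (wd T P n p.2)} with hEdef
  have hE : ∀ n, (μ.prod μ) (E n) = ∫⁻ z, μ (SU n (wd T P n z)) ∂μ := fun n =>
    pair_measure_eq μ hT hP n (hSUm n)
  have hFd : ∀ n (z : Ω), Fdist T P μ z n (Real.exp ((n : ℝ) * ε)) =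
      (μ (SU n (wd T P n z))).toReal := by
    intro n z
    rw [Fdist, cylAt_eq]
  have hint : ∀ n, ∫ z, Fdist T P μ z n (Real.exp ((n : ℝ) * ε)) ∂μ =
      ((μ.prod μ) (E n)).toReal := by
    intro n
    rw [hE n, ← integral_toReal ((measurable_sectmeas μ hT hP n (SU n)).aemeasurable)
      (Filter.Eventually.of_forall fun z => measure_lt_top μ _)]
    exact integral_congr_ae (Filter.Eventually.of_forall fun z => hFd n z)
  have htop : ∑' n, (μ.prod μ) (E n) ≠ ⊤ := by
    have h1 : ∀ n, (μ.prod μ) (E n) =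
        ENNReal.ofReal (∫ z, Fdist T P μ z n (Real.exp ((n : ℝ) * ε)) ∂μ) := fun n => by
      rw [hint n, ENNReal.ofReal_toReal (measure_ne_top _ _)]
    have h2 : ENNReal.ofReal (∑' n, ∫ z, Fdist T P μ z n (Real.exp ((n : ℝ) * ε)) ∂μ) =
        ∑' n, ENNReal.ofReal (∫ z, Fdist T P μ z n (Real.exp ((n : ℝ) * ε)) ∂μ) :=
      ENNReal.ofReal_tsum_of_nonneg
        (fun n => integral_nonneg fun z => ENNReal.toReal_nonneg) hsum
    have h3 : ∑' n, (μ.prod μ) (E n) =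
        ENNReal.ofReal (∑' n, ∫ z, Fdist T P μ z n (Real.exp ((n : ℝ) * ε)) ∂μ) := by
      rw [h2]; exact tsum_congr h1
    rw [h3]; exact ENNReal.ofReal_ne_top
  filter_upwards [ae_eventually_notMem htop] with p hp
  filter_upwards [hp] with n hn hcon
  apply hn
  show p.1 ∈ SU n (wd T P n p.2)
  rw [cylAt_eq] at hcon
  exact hcon

lemma lower_claim (μ : Measure Ω) [IsProbabilityMeasure μ]
    (herg : Ergodic T μ) (hP : Measurable P) (ε h : ℝ) (hε : 0 < ε) :
    ∀ᵐ p ∂(μ.prod μ), ∀ᶠ n : ℕ in atTop,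
      ¬ ((μ (cylAt T P n p.2)).toReal ≤ Real.exp (-((n : ℝ) * (h - ε/2))) ∧
        1 ≤ hitTime T (cylAt T P n p.2) p.1 ∧
        ((hitTime T (cylAt T P n p.2) p.1 : ℕ) : ℝ) ≤ Real.exp ((n : ℝ) * (h - ε))) := by
  have hT : Measurable T := herg.measurable
  set K : ℕ → ℕ := fun n => ⌊Real.exp ((n : ℝ) * (h - ε))⌋₊ with hK
  set SL : (n : ℕ) → (Fin n → ℕ) → Set Ω := fun n w =>
    {x | (μ (cylW T P n w)).toReal ≤ Real.exp (-((n : ℝ) * (h - ε/2))) ∧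
      ∃ i, 1 ≤ i ∧ i ≤ K n ∧ T^[i] x ∈ cylW T P n w} with hSL
  set Bd : ℕ → Set (Ω × Ω) := fun n => {p | p.1 ∈ SL n (wd T P n p.2)} with hBd
  have hperw : ∀ n (w : Fin n → ℕ), μ (SL n w) * μ (cylW T P n w) ≤
      ((K n : ℝ≥0∞) * ENNReal.ofReal (Real.exp (-((n : ℝ) * (h - ε/2))))) * μ (cylW T P n w) := by
    intro n w
    by_cases hsmall : (μ (cylW T P n w)).toReal ≤ Real.exp (-((n : ℝ) * (h - ε/2)))
    · have hsub : SL n w ⊆ ⋃ i ∈ Finset.Icc 1 (K n), T^[i] ⁻¹' (cylW T P n w) := by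
        rintro x ⟨-, i, hi1, hi2, hix⟩
        exact Set.mem_biUnion (Finset.mem_Icc.2 ⟨hi1, hi2⟩) hix
      have hcard : μ (SL n w) ≤ (K n : ℝ≥0∞) * μ (cylW T P n w) := by
        refine (measure_mono hsub).trans ?_
        refine (measure_biUnion_finset_le _ _).trans ?_
        have heach : ∀ i ∈ Finset.Icc 1 (K n),
            μ (T^[i] ⁻¹' (cylW T P n w)) = μ (cylW T P n w) := fun i _ =>
          (herg.toMeasurePreserving.iterate i).measure_preimage
            (measurableSet_cylW hT hP n w).nullMeasurableSet
        rw [Finset.sum_congr rfl heach, Finset.sum_const, Nat.card_Icc]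
        simp [nsmul_eq_mul]
      have hcylle : μ (cylW T P n w) ≤ ENNReal.ofReal (Real.exp (-((n : ℝ) * (h - ε/2)))) :=
        (ENNReal.le_ofReal_iff_toReal_le (measure_ne_top μ _) (Real.exp_nonneg _)).2 hsmall
      calc μ (SL n w) * μ (cylW T P n w)
          ≤ ((K n : ℝ≥0∞) * μ (cylW T P n w)) * μ (cylW T P n w) :=
            mul_le_mul_left hcard _
        _ = (K n : ℝ≥0∞) * (μ (cylW T P n w) * μ (cylW T P n w)) := by ring
        _ ≤ (K n : ℝ≥0∞) * (ENNReal.ofReal (Real.exp (-((n : ℝ) * (h - ε/2)))) * μ (cylW T P n w)) :=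
            mul_le_mul_right (mul_le_mul_left hcylle _) _
        _ = ((K n : ℝ≥0∞) * ENNReal.ofReal (Real.exp (-((n : ℝ) * (h - ε/2))))) * μ (cylW T P n w) := by
            ring
    · have : SL n w = ∅ := by
        ext x; simp only [hSL, Set.mem_setOf_eq, Set.mem_empty_iff_false, iff_false]
        rintro ⟨hc, -⟩; exact hsmall hc
      rw [this]
      simp
  have hbd : ∀ n, (μ.prod μ) (Bd n) ≤ (ENNReal.ofReal (Real.exp (-(ε/2))))^n := by
    intro n
    calc (μ.prod μ) (Bd n) ≤ ∑' w : Fin n → ℕ, μ (SL n w) * μ (cylW T P n w) :=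
        pair_measure_le μ n (SL n)
    _ ≤ ∑' w : Fin n → ℕ,
        ((K n : ℝ≥0∞) * ENNReal.ofReal (Real.exp (-((n : ℝ) * (h - ε/2))))) * μ (cylW T P n w) :=
        ENNReal.tsum_le_tsum (hperw n)
    _ = ((K n : ℝ≥0∞) * ENNReal.ofReal (Real.exp (-((n : ℝ) * (h - ε/2))))) *
        ∑' w : Fin n → ℕ, μ (cylW T P n w) := ENNReal.tsum_mul_left
    _ ≤ ((K n : ℝ≥0∞) * ENNReal.ofReal (Real.exp (-((n : ℝ) * (h - ε/2))))) * 1 :=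
        mul_le_mul_right (tsum_cylW_le μ hT hP n) _
    _ ≤ (ENNReal.ofReal (Real.exp ((n : ℝ) * (h - ε))) *
        ENNReal.ofReal (Real.exp (-((n : ℝ) * (h - ε/2))))) * 1 := by
        refine mul_le_mul_left (mul_le_mul_left ?_ _) _
        rw [← ENNReal.ofReal_natCast]
        exact ENNReal.ofReal_le_ofReal (Nat.floor_le (Real.exp_pos _).le)
    _ = (ENNReal.ofReal (Real.exp (-(ε/2))))^n := by
        rw [mul_one, ← ENNReal.ofReal_mul (Real.exp_nonneg _), ← Real.exp_add]
        rw [← ENNReal.ofReal_pow (Real.exp_nonneg _), ← Real.exp_nat_mul]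
        congr 1
        ring
  have htop : ∑' n, (μ.prod μ) (Bd n) ≠ ⊤ := by
    refine ne_top_of_le_ne_top ?_ (ENNReal.tsum_le_tsum hbd)
    rw [ENNReal.tsum_geometric]
    refine ENNReal.inv_ne_top.2 ?_
    intro hc
    have hlt : ENNReal.ofReal (Real.exp (-(ε/2))) < 1 :=
      ENNReal.ofReal_lt_one.2 (Real.exp_lt_one_iff.2 (by linarith))
    exact absurd (tsub_eq_zero_iff_le.1 hc) (not_le.2 hlt)
  filter_upwards [ae_eventually_notMem htop] with p hp
  filter_upwards [hp] with n hn hcon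
  obtain ⟨hm, hτ1, hτK⟩ := hcon
  apply hn
  show p.1 ∈ SL n (wd T P n p.2)
  rw [cylAt_eq] at hm hτ1 hτK
  refine ⟨hm, hitTime T (cylW T P n (wd T P n p.2)) p.1, hτ1, Nat.le_floor hτK, ?_⟩
  exact hitTime_spec hτ1

end ETEaux


open ETEaux in
/-- If `Σ_n ∫ F_z^n(e^{nε}) dμ(z) < ∞` for all small enough `ε > 0`, then
`(1/n) log τ_{A_n(z)}(x) → h_μ` for `μ × μ`-a.e. `(x,z)`. -/
theorem entranceTime_tendsto_entropy_ae_of_summable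
    (μ : Measure Ω) [IsProbabilityMeasure μ] (T : Ω → Ω) (P : Ω → ℕ)
    (hP : Measurable P) (herg : Ergodic T μ) (hgen : GeneratingPartition T P μ)
    (h : ℝ) (hh : 0 ≤ h) (hSMB : SMB T P μ h)
    (hsum : ∃ ε₀ > (0 : ℝ), ∀ ε : ℝ, 0 < ε → ε ≤ ε₀ →
      Summable (fun n : ℕ => ∫ z, Fdist T P μ z n (Real.exp (n * ε)) ∂μ)) :
    ∀ᵐ p ∂(μ.prod μ), Tendsto
      (fun n : ℕ => Real.log (hitTime T (cylAt T P n p.2) p.1) / n) atTop (nhds h) := by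
  obtain ⟨ε₀, hε₀, hsum⟩ := hsum
  have hT : Measurable T := herg.measurable
  -- good z's, lifted to the product
  have hz2 : ∀ᵐ p ∂(μ.prod μ),
      (Tendsto (fun n : ℕ => -Real.log ((μ (cylAt T P n p.2)).toReal) / n) atTop (nhds h)) ∧
      ∀ n, μ (cylAt T P n p.2) ≠ 0 :=
    ae_snd' μ (hSMB.and (ae_cyl_pos μ hT hP))
  -- the hitting time is a.s. at least one
  have hτ1 : ∀ᵐ p ∂(μ.prod μ), ∀ n, 1 ≤ hitTime T (cylAt T P n p.2) p.1 := by
    rw [ae_all_iff]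
    intro n
    have hset : {p : Ω × Ω | ¬ 1 ≤ hitTime T (cylAt T P n p.2) p.1} =
        {p : Ω × Ω | p.1 ∈ (fun w => {x | hitTime T (cylW T P n w) x = 0}) (wd T P n p.2)} := by
      ext p
      simp only [Set.mem_setOf_eq, cylAt_eq, not_le, Nat.lt_one_iff]
    rw [ae_iff, hset]
    refine prod_null_of_sections μ
      (measurableSet_pair hT hP n fun w =>
        measurable_hitTime hT (measurableSet_cylW hT hP n w) (measurableSet_singleton 0)) ?_
    filter_upwards [ae_cyl_pos μ hT hP] with z hz
    have h1 : ∀ᵐ x ∂μ, 1 ≤ hitTime T (cylW T P n (wd T P n z)) x :=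
      ae_one_le_hitTime herg (measurableSet_cylW hT hP n (wd T P n z))
        (by rw [← cylAt_eq]; exact hz n)
    refine measure_mono_null ?_ (ae_iff.1 h1)
    intro x hx
    simp only [Set.mem_setOf_eq] at hx ⊢
    omega
  -- upper bound claim
  have main_up : ∀ ε : ℝ, 0 < ε → ε ≤ ε₀ → ∀ᵐ p ∂(μ.prod μ), ∀ᶠ n : ℕ in atTop,
      Real.log (hitTime T (cylAt T P n p.2) p.1) ≤ (n : ℝ) * (h + 2 * ε) := by
    intro ε hε hεε₀
    filter_upwards [upper_claim μ hT hP ε (hsum ε hε hεε₀), hz2] with p hp hz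
    obtain ⟨hz1, hz2'⟩ := hz
    have h1 : ∀ᶠ n : ℕ in atTop,
        -Real.log ((μ (cylAt T P n p.2)).toReal) / n < h + ε :=
      hz1.eventually_lt_const (by linarith)
    filter_upwards [hp, h1, eventually_ge_atTop 1] with n hn hlog hn1
    have hm0 : 0 < (μ (cylAt T P n p.2)).toReal :=
      ENNReal.toReal_pos (hz2' n) (measure_ne_top μ _)
    have hnR : (1 : ℝ) ≤ n := by exact_mod_cast hn1
    have hlog2 : -Real.log ((μ (cylAt T P n p.2)).toReal) < n * (h + ε) := by
      have := (div_lt_iff₀ (by linarith : (0:ℝ) < n)).1 hlog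
      nlinarith
    have hm_ge : Real.exp (-((n : ℝ) * (h + ε))) ≤ (μ (cylAt T P n p.2)).toReal := by
      rw [← Real.exp_log hm0]
      exact Real.exp_le_exp.2 (by linarith)
    have hτlt : ((hitTime T (cylAt T P n p.2) p.1 : ℕ) : ℝ) <
        Real.exp ((n : ℝ) * (h + 2 * ε)) := by
      have hlt : ((hitTime T (cylAt T P n p.2) p.1 : ℕ) : ℝ) <
          Real.exp ((n : ℝ) * ε) / (μ (cylAt T P n p.2)).toReal := lt_of_not_ge hn
      refine hlt.trans_le ?_
      rw [div_le_iff₀ hm0]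
      calc Real.exp ((n : ℝ) * ε)
          = Real.exp ((n : ℝ) * (h + 2 * ε)) * Real.exp (-((n : ℝ) * (h + ε))) := by
            rw [← Real.exp_add]; ring_nf
        _ ≤ Real.exp ((n : ℝ) * (h + 2 * ε)) * (μ (cylAt T P n p.2)).toReal := by
            exact mul_le_mul_of_nonneg_left hm_ge (Real.exp_nonneg _)
    rcases Nat.eq_zero_or_pos (hitTime T (cylAt T P n p.2) p.1) with h0 | hpos
    · rw [h0]
      simp only [Nat.cast_zero, Real.log_zero]
      have : (0:ℝ) ≤ (n : ℝ) * (h + 2 * ε) := by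
        apply mul_nonneg (by positivity)
        linarith
      exact this
    · have hτpos : (0:ℝ) < ((hitTime T (cylAt T P n p.2) p.1 : ℕ) : ℝ) := by
        exact_mod_cast hpos
      have := Real.log_lt_log hτpos hτlt
      rw [Real.log_exp] at this
      linarith
  -- lower bound claim
  have main_low : ∀ ε : ℝ, 0 < ε → ∀ᵐ p ∂(μ.prod μ), ∀ᶠ n : ℕ in atTop,
      (n : ℝ) * (h - ε) ≤ Real.log (hitTime T (cylAt T P n p.2) p.1) := by
    intro ε hε
    filter_upwards [lower_claim μ herg hP ε h hε, hz2, hτ1] with p hp hz hτ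
    obtain ⟨hz1, hz2'⟩ := hz
    have h1 : ∀ᶠ n : ℕ in atTop,
        h - ε/2 < -Real.log ((μ (cylAt T P n p.2)).toReal) / n :=
      hz1.eventually_const_lt (by linarith)
    filter_upwards [hp, h1, eventually_ge_atTop 1] with n hn hlog hn1
    have hm0 : 0 < (μ (cylAt T P n p.2)).toReal :=
      ENNReal.toReal_pos (hz2' n) (measure_ne_top μ _)
    have hnR : (1 : ℝ) ≤ n := by exact_mod_cast hn1
    have hm_le : (μ (cylAt T P n p.2)).toReal ≤ Real.exp (-((n : ℝ) * (h - ε/2))) := by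
      rw [← Real.exp_log hm0]
      apply Real.exp_le_exp.2
      have := (lt_div_iff₀ (by linarith : (0:ℝ) < n)).1 hlog
      nlinarith
    by_contra hcon
    push_neg at hcon
    apply hn
    refine ⟨hm_le, hτ n, ?_⟩
    by_contra hτbig
    push_neg at hτbig
    have := Real.log_lt_log (Real.exp_pos _) hτbig
    rw [Real.log_exp] at this
    linarith
  -- combine
  set εf : ℕ → ℝ := fun k => min (1 / (k + 1)) ε₀ with hεf
  have hεfpos : ∀ k : ℕ, 0 < εf k := fun k => lt_min (by positivity) hε₀
  have key : ∀ᵐ p ∂(μ.prod μ), ∀ k : ℕ,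
      (∀ᶠ n : ℕ in atTop,
        Real.log (hitTime T (cylAt T P n p.2) p.1) ≤ (n : ℝ) * (h + 2 * εf k)) ∧
      (∀ᶠ n : ℕ in atTop,
        (n : ℝ) * (h - εf k) ≤ Real.log (hitTime T (cylAt T P n p.2) p.1)) := by
    rw [ae_all_iff]
    intro k
    exact (main_up (εf k) (hεfpos k) (min_le_right _ _)).and (main_low (εf k) (hεfpos k))
  filter_upwards [key] with p hp
  rw [tendsto_order]
  constructor
  · intro a ha
    obtain ⟨k, hk⟩ := exists_nat_one_div_lt (by linarith : (0:ℝ) < h - a)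
    have hεk : εf k ≤ 1 / (k + 1) := min_le_left _ _
    filter_upwards [(hp k).2, eventually_ge_atTop 1] with n hlow hn1
    have hnpos : (0:ℝ) < n := by
      have : (1:ℝ) ≤ n := by exact_mod_cast hn1
      linarith
    rw [lt_div_iff₀ hnpos]
    have h2 : a < h - εf k := by
      have : εf k < h - a := lt_of_le_of_lt hεk hk
      linarith
    calc a * n < (h - εf k) * n := mul_lt_mul_of_pos_right h2 hnpos
      _ = (n : ℝ) * (h - εf k) := by ring
      _ ≤ Real.log (hitTime T (cylAt T P n p.2) p.1) := hlow
  · intro a ha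
    obtain ⟨k, hk⟩ := exists_nat_one_div_lt (by linarith : (0:ℝ) < (a - h) / 2)
    have hεk : εf k ≤ 1 / (k + 1) := min_le_left _ _
    filter_upwards [(hp k).1, eventually_ge_atTop 1] with n hup hn1
    have hnpos : (0:ℝ) < n := by
      have : (1:ℝ) ≤ n := by exact_mod_cast hn1
      linarith
    rw [div_lt_iff₀ hnpos]
    calc Real.log (hitTime T (cylAt T P n p.2) p.1) ≤ (n : ℝ) * (h + 2 * εf k) := hup
      _ ≤ (n : ℝ) * (h + 2 * (1 / (k + 1))) := by
          apply mul_le_mul_of_nonneg_left _ hnpos.le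
          linarith
      _ < (n : ℝ) * a := by
          apply mul_lt_mul_of_pos_left _ hnpos
          linarith
      _ = a * n := by ring
end

section
/- For every ε > 0, (μ × μ)({(x,z) ∈ Ω × Ω : (1/n) log τ_{A_n(z)}(x) ≤ h_μ − ε}) → 0 as n → ∞. -/
open MeasureTheory Filter Set
set_option linter.unusedSectionVars false
set_option linter.unusedVariables false
set_option maxHeartbeats 1000000
open scoped ENNReal


variable {Ω : Type*} [MeasurableSpace Ω]

section helpers

variable {T : Ω → Ω} {P : Ω → ℕ} {μ : Measure Ω}

lemma cylAt_eq_cylW (T : Ω → Ω) (P : Ω → ℕ) (n : ℕ) (x : Ω) :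
    cylAt T P n x = cylW T P n (fun i => P (T^[(i : ℕ)] x)) := by
  ext y
  constructor
  · intro hy i; exact hy i i.2
  · intro hy i hi; exact hy ⟨i, hi⟩

lemma measurableSet_cylW (hP : Measurable P) (hT : Measurable T) {n : ℕ} (w : Fin n → ℕ) :
    MeasurableSet (cylW T P n w) := by
  have : cylW T P n w = ⋂ i : Fin n, (fun y => P (T^[(i : ℕ)] y)) ⁻¹' {w i} := by
    ext y; simp [cylW]
  rw [this]
  exact MeasurableSet.iInter fun i =>
    (hP.comp (hT.iterate _)) (measurableSet_singleton _)

lemma measurableSet_cylAt (hP : Measurable P) (hT : Measurable T) (n : ℕ) (x : Ω) :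
    MeasurableSet (cylAt T P n x) := by
  rw [cylAt_eq_cylW]; exact measurableSet_cylW hP hT _

lemma measurable_mu_cylAt (hP : Measurable P) (hT : Measurable T) (n : ℕ) :
    Measurable (fun z => μ (cylAt T P n z)) := by
  have h1 : (fun z => μ (cylAt T P n z)) =
      (fun w : Fin n → ℕ => μ (cylW T P n w)) ∘ (fun z => fun i : Fin n => P (T^[(i : ℕ)] z)) := by
    funext z; simp [cylAt_eq_cylW]
  rw [h1]
  exact (measurable_of_countable _).comp
    (measurable_pi_lambda _ fun i => hP.comp (hT.iterate _))

lemma measurableSet_rel (hP : Measurable P) (hT : Measurable T) (n i : ℕ) :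
    MeasurableSet {p : Ω × Ω | T^[i] p.1 ∈ cylAt T P n p.2} := by
  have : {p : Ω × Ω | T^[i] p.1 ∈ cylAt T P n p.2} =
      ⋂ j, ⋂ (_ : j < n), ⋃ k : ℕ,
        ((fun p : Ω × Ω => P (T^[j] (T^[i] p.1))) ⁻¹' {k} ∩
         (fun p : Ω × Ω => P (T^[j] p.2)) ⁻¹' {k}) := by
    ext p
    simp only [mem_iInter, mem_iUnion, mem_inter_iff, mem_preimage, mem_singleton_iff]
    constructor
    · intro hp j hj; exact ⟨P (T^[j] p.2), hp j hj, rfl⟩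
    · intro hp j hj; obtain ⟨k, hk1, hk2⟩ := hp j hj; exact hk1.trans hk2.symm
  rw [this]
  refine MeasurableSet.iInter fun j => MeasurableSet.iInter fun _ =>
    MeasurableSet.iUnion fun k => MeasurableSet.inter ?_ ?_
  · exact ((hP.comp (hT.iterate j)).comp ((hT.iterate i).comp measurable_fst))
      (measurableSet_singleton _)
  · exact ((hP.comp (hT.iterate j)).comp measurable_snd) (measurableSet_singleton _)

lemma ae_cyl_ne_zero (hP : Measurable P) (hT : Measurable T) (n : ℕ) :
    ∀ᵐ z ∂μ, μ (cylAt T P n z) ≠ 0 := by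
  rw [ae_iff]
  simp only [not_not]
  have hnull : μ (⋃ w ∈ {w : Fin n → ℕ | μ (cylW T P n w) = 0}, cylW T P n w) = 0 :=
    (measure_biUnion_null_iff (to_countable _)).2 fun w hw => hw
  refine measure_mono_null ?_ hnull
  intro z hz
  have hw : μ (cylW T P n (fun i : Fin n => P (T^[(i : ℕ)] z))) = 0 := by
    simpa [← cylAt_eq_cylW] using hz
  exact mem_biUnion hw (fun i => rfl)

lemma ae_hits [IsProbabilityMeasure μ] (herg : Ergodic T μ) {A : Set Ω}
    (hA : MeasurableSet A) (h0 : μ A ≠ 0) :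
    ∀ᵐ x ∂μ, ∃ i : ℕ, T^[i + 1] x ∈ A := by
  have hT : Measurable T := herg.toMeasurePreserving.measurable
  set C : Set Ω := ⋃ i : ℕ, T^[i + 1] ⁻¹' A with hC
  have hCm : MeasurableSet C := MeasurableSet.iUnion fun i => (hT.iterate _) hA
  have hsub : T ⁻¹' C ⊆ C := by
    intro x hx
    obtain ⟨i, hi⟩ := mem_iUnion.mp hx
    exact mem_iUnion.mpr ⟨i + 1, by
      simpa [Function.iterate_succ_apply] using hi⟩
  have := herg.ae_empty_or_univ_of_preimage_ae_le' hCm.nullMeasurableSet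
    (HasSubset.Subset.eventuallyLE hsub) (measure_ne_top μ C)
  rcases this with hemp | huniv
  · exfalso
    have h1 : μ (T^[1] ⁻¹' A) = μ A :=
      (herg.toMeasurePreserving.iterate 1).measure_preimage hA.nullMeasurableSet
    have h2 : μ (T^[1] ⁻¹' A) ≤ μ C := measure_mono (subset_iUnion (fun i => T^[i+1] ⁻¹' A) 0)
    have h3 : μ C = 0 := by
      have := hemp.symm
      rw [ae_eq_empty] at hemp
      exact hemp
    rw [h3, h1] at h2
    exact h0 (le_antisymm h2 zero_le)
  · have : ∀ᵐ x ∂μ, x ∈ C := by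
      rw [ae_eq_univ] at huniv
      exact (ae_iff (p := fun x => x ∈ C)).mpr huniv
    filter_upwards [this] with x hx
    exact mem_iUnion.mp hx

end helpers

/-- For every `ε > 0`, `(μ × μ)({(x,z) : (1/n) log τ_{A_n(z)}(x) ≤ h_μ − ε}) → 0`. -/


theorem entranceTime_lower_deviation_tendsto_zero
    (μ : Measure Ω) [IsProbabilityMeasure μ] (T : Ω → Ω) (P : Ω → ℕ)
    (hP : Measurable P) (herg : Ergodic T μ) (hgen : GeneratingPartition T P μ)
    (h : ℝ) (hh : 0 ≤ h) (hSMB : SMB T P μ h)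
 :
    ∀ ε > (0 : ℝ), Tendsto (fun n : ℕ =>
        (μ.prod μ) {p : Ω × Ω |
          Real.log (hitTime T (cylAt T P n p.2) p.1) / n ≤ h - ε})
      atTop (nhds 0) := by
  intro ε hε
  have hSMB' : ∀ᵐ x ∂μ, Tendsto (fun n : ℕ =>
      -Real.log ((μ (cylAt T P n x)).toReal) / n) atTop (nhds h) := hSMB
  have hT : Measurable T := herg.toMeasurePreserving.measurable
  set a : ℕ → ℝ := fun n => Real.exp (-(n * (h - ε / 2))) with ha_def
  set G : ℕ → Set Ω := fun n => {z | μ (cylAt T P n z) ≤ ENNReal.ofReal (a n)} with hG_def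
  have hGmeas : ∀ n, MeasurableSet (G n) := fun n =>
    (measurable_mu_cylAt hP hT n) measurableSet_Iic
  -- Step 1 : μ (G n)ᶜ → 0
  have hGc : Tendsto (fun n => μ (G n)ᶜ) atTop (nhds 0) := by
    have hrep : (fun n => μ (G n)ᶜ) =
        fun n => ∫⁻ z, ((G n)ᶜ).indicator (fun _ => (1 : ℝ≥0∞)) z ∂μ := by
      funext n; exact (lintegral_indicator_one (hGmeas n).compl).symm
    rw [hrep, show (0 : ℝ≥0∞) = ∫⁻ _, (0 : ℝ≥0∞) ∂μ by simp]
    refine tendsto_lintegral_of_dominated_convergence (fun _ => 1)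
      (fun n => measurable_one.indicator (hGmeas n).compl)
      (fun n => ae_of_all _ fun z => Set.indicator_le (fun _ _ => le_rfl) z)
      (by simp) ?_
    filter_upwards [hSMB'] with z hz
    have h1 : ∀ᶠ n : ℕ in atTop,
        h - ε / 2 < -Real.log ((μ (cylAt T P n z)).toReal) / n :=
      hz.eventually (eventually_gt_nhds (by linarith))
    have hev : ∀ᶠ n : ℕ in atTop, z ∈ G n := by
      filter_upwards [h1, eventually_ge_atTop 1] with n hn hn1
      have hnpos : (0 : ℝ) < n := by exact_mod_cast hn1
      set t : ℝ := (μ (cylAt T P n z)).toReal with ht_def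
      have htle : t ≤ a n := by
        by_contra hcon
        push_neg at hcon
        have htpos : 0 < t := lt_trans (Real.exp_pos _) hcon
        have hlog : -(n * (h - ε / 2)) < Real.log t :=
          (Real.lt_log_iff_exp_lt htpos).mpr hcon
        have : -Real.log t / n < h - ε / 2 := by
          rw [div_lt_iff₀ hnpos]; nlinarith
        linarith
      exact (ENNReal.le_ofReal_iff_toReal_le (measure_ne_top μ _)
        (Real.exp_pos _).le).mpr htle
    refine Tendsto.congr' ?_ (tendsto_const_nhds (x := (0 : ℝ≥0∞)))
    filter_upwards [hev] with n hn
    exact (Set.indicator_of_notMem (by simpa using hn) _).symm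
  -- covering sets
  set M : ℕ → ℕ := fun n => ⌊Real.exp (n * (h - ε))⌋₊ with hM_def
  set D : ℕ → Set (Ω × Ω) := fun n =>
    ⋂ i : ℕ, {p : Ω × Ω | T^[i + 1] p.1 ∈ cylAt T P n p.2}ᶜ with hD_def
  set E : ℕ → ℕ → Set (Ω × Ω) := fun n i =>
    (Prod.snd ⁻¹' G n) ∩ {p : Ω × Ω | T^[i] p.1 ∈ cylAt T P n p.2} with hE_def
  have hDmeas : ∀ n, MeasurableSet (D n) := fun n =>
    MeasurableSet.iInter fun i => (measurableSet_rel hP hT n (i + 1)).compl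
  have hEmeas : ∀ n i, MeasurableSet (E n i) := fun n i =>
    ((hGmeas n).preimage measurable_snd).inter (measurableSet_rel hP hT n i)
  -- Step 2 : (μ × μ) (D n) = 0
  have hD0 : ∀ n, (μ.prod μ) (D n) = 0 := by
    intro n
    rw [Measure.prod_apply_symm (hDmeas n)]
    have hfib : ∀ᵐ z ∂μ, μ ((fun x => (x, z)) ⁻¹' D n) = 0 := by
      filter_upwards [ae_cyl_ne_zero (μ := μ) hP hT n] with z hz
      have hhit := ae_hits herg (measurableSet_cylAt hP hT n z) hz
      rw [ae_iff] at hhit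
      refine measure_mono_null ?_ hhit
      intro x hx
      simp only [hD_def, mem_iInter, mem_compl_iff, mem_setOf_eq, mem_preimage] at hx ⊢
      push_neg
      exact fun i => hx i
    calc ∫⁻ z, μ ((fun x => (x, z)) ⁻¹' D n) ∂μ = ∫⁻ _, 0 ∂μ := lintegral_congr_ae hfib
    _ = 0 := lintegral_zero
  -- Step 3 : (μ × μ) (E n i) ≤ ofReal (a n)
  have hE1 : ∀ n i, (μ.prod μ) (E n i) ≤ ENNReal.ofReal (a n) := by
    intro n i
    rw [Measure.prod_apply_symm (hEmeas n i)]
    calc ∫⁻ z, μ ((fun x => (x, z)) ⁻¹' E n i) ∂μ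
        ≤ ∫⁻ _, ENNReal.ofReal (a n) ∂μ := by
          refine lintegral_mono fun z => ?_
          by_cases hz : z ∈ G n
          · have hfib : (fun x => (x, z)) ⁻¹' E n i = T^[i] ⁻¹' cylAt T P n z := by
              ext x; simp [hE_def, hz]
            rw [hfib, (herg.toMeasurePreserving.iterate i).measure_preimage
              (measurableSet_cylAt hP hT n z).nullMeasurableSet]
            exact hz
          · have hfib : (fun x => (x, z)) ⁻¹' E n i = ∅ := by
              ext x; simp [hE_def, hz]
            rw [hfib]; simp
    _ = ENNReal.ofReal (a n) := by simp
  -- Step 4 : covering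
  have hsub : ∀ n, 1 ≤ n →
      {p : Ω × Ω | Real.log (hitTime T (cylAt T P n p.2) p.1) / n ≤ h - ε} ⊆
        (univ ×ˢ (G n)ᶜ) ∪ D n ∪ ⋃ i ∈ Finset.Icc 1 (M n), E n i := by
    intro n hn p hp
    simp only [mem_setOf_eq] at hp
    by_cases hz : p.2 ∈ G n
    · by_cases hτ : hitTime T (cylAt T P n p.2) p.1 = 0
      · refine Or.inl (Or.inr (mem_iInter.mpr fun i => ?_))
        rcases Nat.sInf_eq_zero.mp hτ with h0 | hemp
        · exact absurd h0.1 (by norm_num)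
        · intro hmem
          have hin : (i + 1) ∈ {j | 1 ≤ j ∧ T^[j] p.1 ∈ cylAt T P n p.2} :=
            ⟨Nat.succ_le_succ (Nat.zero_le i), hmem⟩
          rw [hemp] at hin
          exact hin
      · refine Or.inr ?_
        have hne : {j | 1 ≤ j ∧ T^[j] p.1 ∈ cylAt T P n p.2}.Nonempty := by
          by_contra hcon
          rw [not_nonempty_iff_eq_empty] at hcon
          exact hτ (by rw [hitTime, hcon, Nat.sInf_empty])
        have hmem := Nat.sInf_mem hne
        obtain ⟨h1τ, hmemA⟩ := hmem
        set τ := hitTime T (cylAt T P n p.2) p.1 with hτ_def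
        have hτle : τ ≤ M n := by
          have hnpos : (0 : ℝ) < n := by exact_mod_cast hn
          have hτpos : (0 : ℝ) < τ := by exact_mod_cast Nat.pos_of_ne_zero hτ
          have hlog : Real.log τ ≤ (h - ε) * n := (div_le_iff₀ hnpos).mp hp
          refine Nat.le_floor ?_
          calc (τ : ℝ) = Real.exp (Real.log τ) := (Real.exp_log hτpos).symm
          _ ≤ Real.exp (n * (h - ε)) := Real.exp_le_exp.mpr (by nlinarith)
        exact mem_iUnion₂.mpr ⟨τ, Finset.mem_Icc.mpr ⟨h1τ, hτle⟩, ⟨hz, hmemA⟩⟩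
    · exact Or.inl (Or.inl ⟨mem_univ _, hz⟩)
  -- Step 5 : the bound
  have hbound : ∀ n, 1 ≤ n →
      (μ.prod μ) {p : Ω × Ω | Real.log (hitTime T (cylAt T P n p.2) p.1) / n ≤ h - ε} ≤
        μ (G n)ᶜ + ENNReal.ofReal (Real.exp (-(n * (ε / 2)))) := by
    intro n hn
    calc (μ.prod μ) {p : Ω × Ω | Real.log (hitTime T (cylAt T P n p.2) p.1) / n ≤ h - ε}
        ≤ (μ.prod μ) ((univ ×ˢ (G n)ᶜ) ∪ D n ∪ ⋃ i ∈ Finset.Icc 1 (M n), E n i) :=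
          measure_mono (hsub n hn)
    _ ≤ (μ.prod μ) ((univ ×ˢ (G n)ᶜ) ∪ D n) + (μ.prod μ) (⋃ i ∈ Finset.Icc 1 (M n), E n i) :=
          measure_union_le _ _
    _ ≤ ((μ.prod μ) (univ ×ˢ (G n)ᶜ) + (μ.prod μ) (D n)) +
          ∑ i ∈ Finset.Icc 1 (M n), (μ.prod μ) (E n i) :=
          add_le_add (measure_union_le _ _) (measure_biUnion_finset_le _ _)
    _ ≤ (μ (G n)ᶜ + 0) + ∑ i ∈ Finset.Icc 1 (M n), ENNReal.ofReal (a n) := by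
          refine add_le_add (add_le_add ?_ (le_of_eq (hD0 n))) ?_
          · rw [Measure.prod_prod, measure_univ, one_mul]
          · exact Finset.sum_le_sum fun i _ => hE1 n i
    _ = μ (G n)ᶜ + (M n : ℝ≥0∞) * ENNReal.ofReal (a n) := by
          rw [add_zero, Finset.sum_const, Nat.card_Icc, nsmul_eq_mul]
          norm_num
    _ ≤ μ (G n)ᶜ + ENNReal.ofReal (Real.exp (n * (h - ε))) * ENNReal.ofReal (a n) := by
          refine add_le_add le_rfl (mul_le_mul_left ?_ _)
          rw [← ENNReal.ofReal_natCast]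
          exact ENNReal.ofReal_le_ofReal (Nat.floor_le (Real.exp_pos _).le)
    _ = μ (G n)ᶜ + ENNReal.ofReal (Real.exp (-(n * (ε / 2)))) := by
          rw [← ENNReal.ofReal_mul (Real.exp_pos _).le, ha_def, ← Real.exp_add]
          congr 2
          ring
  -- Step 6 : squeeze
  have htail : Tendsto (fun n : ℕ => ENNReal.ofReal (Real.exp (-(n * (ε / 2)))))
      atTop (nhds 0) := by
    have hre : Tendsto (fun n : ℕ => Real.exp (-(n * (ε / 2)))) atTop (nhds 0) := by
      refine Real.tendsto_exp_atBot.comp ?_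
      refine tendsto_neg_atTop_atBot.comp ?_
      exact (tendsto_natCast_atTop_atTop).atTop_mul_const (by positivity)
    have := ENNReal.tendsto_ofReal hre
    simpa using this
  have hupper : Tendsto (fun n : ℕ => μ (G n)ᶜ + ENNReal.ofReal (Real.exp (-(n * (ε / 2)))))
      atTop (nhds 0) := by
    have := hGc.add htail
    simpa using this
  refine tendsto_of_tendsto_of_tendsto_of_le_of_le' tendsto_const_nhds hupper
    (Eventually.of_forall fun n => zero_le) ?_
  filter_upwards [eventually_ge_atTop 1] with n hn
  exact hbound n hn
end
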